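/- Let a ∈ ℝ²₊ with |a| = 1 and suppose f is a self-dual antinorm on ℝ²₊ whose unit ball's closest point to the origin is a. Let K₁ be one of the two closed angles into which the ray through a splits ℝ²₊, and set f̃₂(y) = inf_{x ∈ K₁} (y,x)/f(x) for y in the other angle K₂. Then f(y) = f̃₂(y) for all y ∈ K₂; i.e., the restriction of f to K₂ is determined by its restriction to K₁ via the polar formula. -/

import Mathlib

/-- The nonnegative orthant in ℝ^d. -/
def orthant (d : ℕ) : Set (EuclideanSpace ℝ (Fin d)) := {x | ∀ i, 0 ≤ x i}

/-- An antinorm on ℝ^d₊: concave, positively homogeneous, nonnegative,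
and positive somewhere. -/
def IsAntinorm {d : ℕ} (f : EuclideanSpace ℝ (Fin d) → ℝ) : Prop :=
  ConcaveOn ℝ (orthant d) f ∧
  (∀ x ∈ orthant d, ∀ c : ℝ, 0 ≤ c → f (c • x) = c * f x) ∧
  (∀ x ∈ orthant d, 0 ≤ f x) ∧
  (∃ x ∈ orthant d, 0 < f x)

/-- The dual antinorm f*(y) = inf{(y,x) : x ∈ ℝ^d₊, f(x) ≥ 1}. -/
noncomputable def dualAntinorm {d : ℕ} (f : EuclideanSpace ℝ (Fin d) → ℝ)
    (y : EuclideanSpace ℝ (Fin d)) : ℝ :=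
  sInf ((fun x => (inner ℝ y x : ℝ)) '' {x | x ∈ orthant d ∧ 1 ≤ f x})

/-!
Self-duality gives f(y) = inf {(y,x) : f(x) ≥ 1}, and the points x of K₁ contribute exactly
the polar infimum over K₁ after rescaling to f(x) = 1. A point x of K₂ with f(x) ≥ 1 satisfies
(a,x) ≥ f*(a) = f(a) = 1, and since y and x lie on the same side of the ray through the unit
vector a, this forces (y,x) ≥ (y,a); so K₂ contributes nothing below the value (y,a), which
is already attained at a ∈ K₁.
-/

open RealInnerProductSpace

lemma inner_nonneg_of_mem_orthant {d : ℕ} {x y : EuclideanSpace ℝ (Fin d)}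
    (hx : x ∈ orthant d) (hy : y ∈ orthant d) : 0 ≤ ⟪x, y⟫ := by
  rw [PiLp.inner_apply]
  exact Finset.sum_nonneg fun i _ => by simpa using mul_nonneg (hy i) (hx i)

section Dual

variable {d : ℕ} {f : EuclideanSpace ℝ (Fin d) → ℝ} {x y : EuclideanSpace ℝ (Fin d)}

lemma dualAntinorm_le_inner (hy : y ∈ orthant d) (hx : x ∈ orthant d) (hfx : 1 ≤ f x) :
    dualAntinorm f y ≤ ⟪y, x⟫ := by
  refine csInf_le ⟨0, ?_⟩ ⟨x, ⟨hx, hfx⟩, rfl⟩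
  rintro _ ⟨z, ⟨hz, -⟩, rfl⟩
  exact inner_nonneg_of_mem_orthant hy hz

lemma dualAntinorm_le_inner_div
    (hhom : ∀ x ∈ orthant d, ∀ c : ℝ, 0 ≤ c → f (c • x) = c * f x)
    (hnonneg : ∀ x ∈ orthant d, 0 ≤ f x)
    (hy : y ∈ orthant d) (hx : x ∈ orthant d) (hfx : f x ≠ 0) :
    dualAntinorm f y ≤ ⟪y, x⟫ / f x := by
  have hc : 0 ≤ (f x)⁻¹ := inv_nonneg.2 (hnonneg x hx)
  have hcx : (f x)⁻¹ • x ∈ orthant d := fun i => by simpa using mul_nonneg hc (hx i)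
  have hfcx : f ((f x)⁻¹ • x) = 1 := by rw [hhom x hx _ hc, inv_mul_cancel₀ hfx]
  calc dualAntinorm f y ≤ ⟪y, (f x)⁻¹ • x⟫ := dualAntinorm_le_inner hy hcx hfcx.ge
    _ = ⟪y, x⟫ / f x := by rw [real_inner_smul_right, inv_mul_eq_div]

lemma dualAntinorm_eq_sInf_inner_div
    (hhom : ∀ x ∈ orthant d, ∀ c : ℝ, 0 ≤ c → f (c • x) = c * f x)
    (hnonneg : ∀ x ∈ orthant d, 0 ≤ f x)
    {K : Set (EuclideanSpace ℝ (Fin d))} (hK : K ⊆ orthant d)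
    {a : EuclideanSpace ℝ (Fin d)} (haK : a ∈ K) (hfa : f a = 1) (hy : y ∈ orthant d)
    (hout : ∀ x ∈ orthant d, 1 ≤ f x → x ∉ K → ⟪y, a⟫ ≤ ⟪y, x⟫) :
    dualAntinorm f y = sInf ((fun x => ⟪y, x⟫ / f x) '' {x | x ∈ K ∧ f x ≠ 0}) := by
  set T := (fun x => ⟪y, x⟫ / f x) '' {x | x ∈ K ∧ f x ≠ 0}
  have haT : ⟪y, a⟫ ∈ T := ⟨a, ⟨haK, by simp [hfa]⟩, by simp [hfa]⟩
  have hT : BddBelow T := by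
    refine ⟨0, ?_⟩
    rintro _ ⟨x, ⟨hxK, -⟩, rfl⟩
    exact div_nonneg (inner_nonneg_of_mem_orthant hy (hK hxK)) (hnonneg x (hK hxK))
  apply le_antisymm
  · refine le_csInf ⟨_, haT⟩ ?_
    rintro _ ⟨x, ⟨hxK, hfx⟩, rfl⟩
    exact dualAntinorm_le_inner_div hhom hnonneg hy (hK hxK) hfx
  · refine le_csInf ⟨_, a, ⟨hK haK, hfa.ge⟩, rfl⟩ ?_
    rintro _ ⟨x, ⟨hx, hfx⟩, rfl⟩
    by_cases hxK : x ∈ K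
    · calc sInf T ≤ ⟪y, x⟫ / f x := csInf_le hT ⟨x, ⟨hxK, by positivity⟩, rfl⟩
        _ ≤ ⟪y, x⟫ := div_le_self (inner_nonneg_of_mem_orthant hy hx) hfx
    · exact (csInf_le hT haT).trans (hout x hx hfx hxK)

end Dual

/-- `hside` says that `y` and `x` lie weakly on the same side of the ray through `a`. -/
lemma inner_le_inner_of_sameSide {a x y : EuclideanSpace ℝ (Fin 2)} (ha : a ∈ orthant 2)
    (hnorm : ‖a‖ = 1) (hy : y ∈ orthant 2)
    (hside : 0 ≤ (y 1 * a 0 - y 0 * a 1) * (x 1 * a 0 - x 0 * a 1)) (hax : 1 ≤ ⟪a, x⟫) :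
    ⟪y, a⟫ ≤ ⟪y, x⟫ := by
  have hya : 0 ≤ ⟪y, a⟫ := inner_nonneg_of_mem_orthant hy ha
  have ha2 : a 0 ^ 2 + a 1 ^ 2 = 1 := by
    simpa [Fin.sum_univ_two, hnorm] using (EuclideanSpace.real_norm_sq_eq a).symm
  simp only [PiLp.inner_apply, Fin.sum_univ_two, RCLike.inner_apply, conj_trivial] at hax hya ⊢
  -- expand `y` in the orthonormal basis `a`, `(-a 1, a 0)`
  linear_combination mul_nonneg hya (sub_nonneg.2 hax) + hside
    + (y 0 * x 0 + y 1 * x 1) * ha2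

theorem stmt_18_general (f : EuclideanSpace ℝ (Fin 2) → ℝ) (hf : IsAntinorm f)
    (hsd : ∀ y ∈ orthant 2, dualAntinorm f y = f y)
    (a : EuclideanSpace ℝ (Fin 2)) (ha : a ∈ orthant 2)
    (hnorm : ‖a‖ = 1) (hfa : f a = 1)
    (K₁ K₂ : Set (EuclideanSpace ℝ (Fin 2)))
    -- K₁ is one of the two closed angles into which the ray through a splits
    -- ℝ²₊, and K₂ is the other one :
    (hsplit :
      (K₁ = {x | x ∈ orthant 2 ∧ x 1 * a 0 ≤ x 0 * a 1} ∧
       K₂ = {x | x ∈ orthant 2 ∧ x 0 * a 1 ≤ x 1 * a 0}) ∨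
      (K₁ = {x | x ∈ orthant 2 ∧ x 0 * a 1 ≤ x 1 * a 0} ∧
       K₂ = {x | x ∈ orthant 2 ∧ x 1 * a 0 ≤ x 0 * a 1})) :
    ∀ y ∈ K₂, f y =
      sInf ((fun x => (inner ℝ y x : ℝ) / f x) '' {x | x ∈ K₁ ∧ f x ≠ 0}) := by
  have hax : ∀ x ∈ orthant 2, 1 ≤ f x → 1 ≤ ⟪a, x⟫ := fun x hx hfx =>
    hfa ▸ hsd a ha ▸ dualAntinorm_le_inner ha hx hfx
  intro y hy
  rcases hsplit with ⟨rfl, rfl⟩ | ⟨rfl, rfl⟩ <;>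
  · rw [← hsd y hy.1]
    refine dualAntinorm_eq_sInf_inner_div hf.2.1 hf.2.2.1 (fun x hx => hx.1)
      ⟨ha, (mul_comm _ _).le⟩ hfa hy.1 fun x hx hfx hxK => ?_
    refine inner_le_inner_of_sameSide ha hnorm hy.1 ?_ (hax x hx hfx)
    simp only [Set.mem_ofPred_eq, not_and, not_le] at hy hxK
    nlinarith [hy.2, hxK hx]

/-- Classification in dimension 2: if f is a self-dual antinorm on ℝ²₊ whose
unit ball's closest point to the origin is the unit vector a, and the ray
through a splits ℝ²₊ into the two closed angles K₁ and K₂, then on K₂ the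
antinorm f is recovered from its restriction to K₁ by the polar formula. -/
theorem stmt_18 (f : EuclideanSpace ℝ (Fin 2) → ℝ) (hf : IsAntinorm f)
    (hsd : ∀ y ∈ orthant 2, dualAntinorm f y = f y)
    (a : EuclideanSpace ℝ (Fin 2)) (ha : a ∈ orthant 2)
    (hnorm : ‖a‖ = 1) (hfa : f a = 1)
    (hmin : ∀ x ∈ orthant 2, 1 ≤ f x → ‖a‖ ≤ ‖x‖)
    (K₁ K₂ : Set (EuclideanSpace ℝ (Fin 2)))
    -- K₁ is one of the two closed angles into which the ray through a splits
    -- ℝ²₊, and K₂ is the other one :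
    (hsplit :
      (K₁ = {x | x ∈ orthant 2 ∧ x 1 * a 0 ≤ x 0 * a 1} ∧
       K₂ = {x | x ∈ orthant 2 ∧ x 0 * a 1 ≤ x 1 * a 0}) ∨
      (K₁ = {x | x ∈ orthant 2 ∧ x 0 * a 1 ≤ x 1 * a 0} ∧
       K₂ = {x | x ∈ orthant 2 ∧ x 1 * a 0 ≤ x 0 * a 1})) :
    ∀ y ∈ K₂, f y =
      sInf ((fun x => (inner ℝ y x : ℝ) / f x) '' {x | x ∈ K₁ ∧ f x ≠ 0}) :=
  stmt_18_general f hf hsd a ha hnorm hfa K₁ K₂ hsplit
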